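/- Fix n ∈ ℕ, strictly increasing sigmoids σ_1, …, σ_n : ℝ → ℝ, a vector x̄₂ ∈ ℝⁿ with positive components, a point z₁d ∈ ℝⁿ, and ℓ > 0. Define V : ℝⁿ × ℝⁿ → ℝ by V(z₁, z₂) = (1/2)‖z₁ − z₁d‖² + Σ_{i=1}^n 𝒱_i((z₂)_i / (x̄₂)_i), where 𝒱_i(ζ) = ∫_0^ζ σ_i(s) ds. Then the sublevel set Ω = {(z₁, z₂) ∈ ℝⁿ × ℝⁿ : V(z₁, z₂) ≤ ℓ} is bounded. -/

import Mathlib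

/-!
Each sigmoid integral `𝒱ᵢ` is nonnegative, since `σᵢ` has the sign of its argument, and even,
since `σᵢ` is odd. Beyond a point `M` with `σᵢ M > 0` it grows at least linearly, so `𝒱ᵢ`
tends to infinity at both ends and its sublevel sets are bounded. On `Ω` each summand of `V` is
therefore at most `ℓ`, which confines `z₁` to a ball around `z₁d` and every coordinate of `z₂`
to a bounded set.
-/

open Filter Bornology intervalIntegral

section

variable {f : ℝ → ℝ}

theorem integral_zero_nonneg_of_monotone (hf : Monotone f) (hf0 : f 0 = 0) (ζ : ℝ) :
    0 ≤ ∫ s in (0 : ℝ)..ζ, f s := by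
  rcases le_total 0 ζ with hζ | hζ
  · exact integral_nonneg hζ fun s hs => hf0 ▸ hf hs.1
  · rw [integral_symm, ← integral_neg]
    exact integral_nonneg hζ fun s hs => neg_nonneg.2 (hf0 ▸ hf hs.2)

theorem integral_zero_neg_eq_of_odd (hodd : ∀ x, f (-x) = -f x) (ζ : ℝ) :
    ∫ s in (0 : ℝ)..-ζ, f s = ∫ s in (0 : ℝ)..ζ, f s := by
  have := integral_comp_neg (a := -ζ) (b := 0) f
  simp only [neg_zero, neg_neg, hodd, integral_neg] at this
  rw [integral_symm, ← this]

theorem tendsto_integral_atTop_of_monotone (hf : Monotone f) {M : ℝ} (hM : 0 < f M) (a : ℝ) :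
    Tendsto (fun ζ => ∫ s in a..ζ, f s) atTop atTop := by
  have hlin : Tendsto (fun ζ => (∫ s in a..M, f s) + f M * (ζ - M)) atTop atTop :=
    tendsto_atTop_add_const_left _ _
      ((tendsto_atTop_add_const_right _ _ tendsto_id).const_mul_atTop hM)
  refine tendsto_atTop_mono' _ ((eventually_ge_atTop M).mono fun ζ hζ => ?_) hlin
  show (∫ s in a..M, f s) + f M * (ζ - M) ≤ ∫ s in a..ζ, f s
  have hlower : f M * (ζ - M) ≤ ∫ s in M..ζ, f s :=
    calc f M * (ζ - M) = ∫ _ in M..ζ, f M := by simp [mul_comm]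
      _ ≤ ∫ s in M..ζ, f s :=
        integral_mono_on hζ intervalIntegrable_const hf.intervalIntegrable fun s hs => hf hs.1
  rw [← integral_add_adjacent_intervals (b := M) (c := ζ) hf.intervalIntegrable
    hf.intervalIntegrable]
  linarith

theorem tendsto_integral_cobounded_of_monotone_odd (hf : Monotone f)
    (hodd : ∀ x, f (-x) = -f x) {M : ℝ} (hM : 0 < f M) :
    Tendsto (fun ζ => ∫ s in (0 : ℝ)..ζ, f s) (cobounded ℝ) atTop := by
  have hTop := tendsto_integral_atTop_of_monotone hf hM 0
  rw [IsOrderBornology.cobounded_eq, tendsto_sup]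
  refine ⟨?_, hTop⟩
  simpa [Function.comp_def, integral_zero_neg_eq_of_odd hodd] using
    hTop.comp tendsto_neg_atBot_atTop

end

theorem isBounded_setOf_le_of_tendsto_cobounded {α : Type*} [Bornology α] {F : α → ℝ}
    (hF : Tendsto F (cobounded α) atTop) (ℓ : ℝ) : IsBounded {x | F x ≤ ℓ} := by
  rw [isBounded_def]
  exact (hF.eventually (eventually_gt_atTop ℓ)).mono fun x hx => not_le.2 hx

theorem PiLp.isBounded_setOf_forall_mem {p : ENNReal} {ι : Type*} [Fintype ι] {β : ι → Type*}
    [∀ i, SeminormedAddCommGroup (β i)] {S : ∀ i, Set (β i)} (hS : ∀ i, IsBounded (S i)) :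
    IsBounded {x : PiLp p β | ∀ i, x i ∈ S i} := by
  rw [PiLp.bornology, isBounded_induced]
  refine (IsBounded.pi hS).subset ?_
  rintro _ ⟨x, hx, rfl⟩ i -
  exact hx i

theorem lyapunov_sublevel_bounded_general
    (n : ℕ) (σ : Fin n → ℝ → ℝ)
    (hmono : ∀ i, StrictMono (σ i))
    (hodd : ∀ i x, σ i (-x) = -σ i x)
    (hlim : ∀ i, Filter.Tendsto (σ i) Filter.atTop (nhds 1))
    (xbar₂ : Fin n → ℝ) (hxbar₂ : ∀ i, 0 < xbar₂ i)
    (z₁d : EuclideanSpace ℝ (Fin n)) (ℓ : ℝ) :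
    Bornology.IsBounded
      {p : EuclideanSpace ℝ (Fin n) × EuclideanSpace ℝ (Fin n) |
        (1 / 2) * ‖p.1 - z₁d‖ ^ 2 +
          ∑ i, ∫ s in (0 : ℝ)..(p.2 i / xbar₂ i), σ i s ≤ ℓ} := by
  have hσ0 : ∀ i, σ i 0 = 0 := fun i => self_eq_neg.mp (by simpa using hodd i 0)
  have hnonneg : ∀ i ζ, 0 ≤ ∫ s in (0 : ℝ)..ζ, σ i s := fun i =>
    integral_zero_nonneg_of_monotone (hmono i).monotone (hσ0 i)
  have hcoercive : ∀ i, Tendsto (fun ζ => ∫ s in (0 : ℝ)..(ζ / xbar₂ i), σ i s)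
      (cobounded ℝ) atTop := fun i => by
    obtain ⟨M, hM⟩ := (hlim i |>.eventually (lt_mem_nhds one_pos)).exists
    simpa only [Function.comp_def, div_eq_mul_inv] using
      (tendsto_integral_cobounded_of_monotone_odd (hmono i).monotone (hodd i) hM).comp
        (tendsto_mul_right_cobounded (inv_ne_zero (hxbar₂ i).ne'))
  refine ((Metric.isBounded_closedBall (x := z₁d) (r := √(2 * ℓ))).prod
    (PiLp.isBounded_setOf_forall_mem fun i =>
      isBounded_setOf_le_of_tendsto_cobounded (hcoercive i) ℓ)).subset ?_
  rintro ⟨z₁, z₂⟩ (hV : (1 / 2) * ‖z₁ - z₁d‖ ^ 2 +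
    ∑ i, ∫ s in (0 : ℝ)..(z₂ i / xbar₂ i), σ i s ≤ ℓ)
  have hsum := Finset.sum_nonneg fun i (_ : i ∈ Finset.univ) => hnonneg i (z₂ i / xbar₂ i)
  refine ⟨?_, fun i => ?_⟩
  · rw [Metric.mem_closedBall, dist_eq_norm]
    exact Real.le_sqrt_of_sq_le (by linarith)
  · have hterm := Finset.single_le_sum
      (fun j (_ : j ∈ Finset.univ) => hnonneg j (z₂ j / xbar₂ j)) (Finset.mem_univ i)
    show _ ≤ ℓ
    linarith [sq_nonneg ‖z₁ - z₁d‖]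

/-- The sublevel set `Ω = {(z₁, z₂) : V(z₁,z₂) ≤ ℓ}` of the Lyapunov
candidate `V(z₁,z₂) = ½‖z₁ − z₁d‖² + Σᵢ 𝒱ᵢ((z₂)ᵢ/(x̄₂)ᵢ)`, built from sigmoid integral
functions of strictly increasing sigmoids, is bounded. -/
theorem lyapunov_sublevel_bounded
    (n : ℕ) (σ : Fin n → ℝ → ℝ)
    (hcont : ∀ i, Continuous (σ i))
    (hmono : ∀ i, StrictMono (σ i))
    (hodd : ∀ i x, σ i (-x) = -σ i x)
    (hlim : ∀ i, Filter.Tendsto (σ i) Filter.atTop (nhds 1))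
    (xbar₂ : Fin n → ℝ) (hxbar₂ : ∀ i, 0 < xbar₂ i)
    (z₁d : EuclideanSpace ℝ (Fin n)) (ℓ : ℝ) (hℓ : 0 < ℓ) :
    Bornology.IsBounded
      {p : EuclideanSpace ℝ (Fin n) × EuclideanSpace ℝ (Fin n) |
        (1 / 2) * ‖p.1 - z₁d‖ ^ 2 +
          ∑ i, ∫ s in (0 : ℝ)..(p.2 i / xbar₂ i), σ i s ≤ ℓ} :=
  lyapunov_sublevel_bounded_general n σ hmono hodd hlim xbar₂ hxbar₂ z₁d ℓ
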